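/- arXiv:1906.05324 — 3 statements merged into one kernel-verified Lean document; each statement's English description precedes it below -/
import Mathlib

section
/- Let θ ∈ (ℝ/ℤ)∖{0} with representative θ̂ ∈ (0,1), and set a = θ̂/2 mod 1, b = (θ̂+1)/2 mod 1. Define Ω_0 to be the topological interior of the good region G(a,b) ⊆ 𝕋, and inductively Ω_{n+1} = F^{−1}(Ω_n) ∩ Ω_0, where F(x,y) = (2x,2y). Set NE_1 = ⋂_{n≥0} Ω_n and NE_2 = ⋂_{n≥0} closure(Ω_n). Then the diagonal Δ is contained in the closure of NE_1, and the closure of NE_1 is contained in NE_2 (in particular Δ ⊆ NE_2). -/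
open Set

/-- The circle `ℝ/ℤ`. -/
abbrev 𝕊 := AddCircle (1 : ℝ)

/-- The torus `𝕋 = (ℝ/ℤ) × (ℝ/ℤ)`. -/
abbrev 𝕋 := 𝕊 × 𝕊

/-- The doubling map `F(x, y) = (2x, 2y)` on the torus. -/
noncomputable def F : 𝕋 → 𝕋 := fun p => (p.1 + p.1, p.2 + p.2)

/-- The open arc of `(ℝ/ℤ) ∖ {a, b}` containing `z`, i.e. the connected component of
the complement of `{a, b}` containing `z`. -/
def arcAt (a b z : 𝕊) : Set 𝕊 := connectedComponentIn ({a, b}ᶜ : Set 𝕊) z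

/-- The good region `G(a,b)` of a leaf with distinct endpoints `a, b`: the set of pairs
`(x, y)` such that `x` and `y` both lie in the closure of one and the same of the two
open arcs of `(ℝ/ℤ) ∖ {a, b}`. -/
def goodPair (a b : 𝕊) : Set 𝕋 :=
  {p | ∃ z ∈ ({a, b}ᶜ : Set 𝕊),
        p.1 ∈ closure (arcAt a b z) ∧ p.2 ∈ closure (arcAt a b z)}

/-- The sets `Ω_n`: `Ω_0` is the interior of the good region of the major leaf
`{θ/2, (θ+1)/2}`, and `Ω_{n+1} = F⁻¹(Ω_n) ∩ Ω_0`. -/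
noncomputable def Omega (θ : ℝ) : ℕ → Set 𝕋
  | 0 => interior (goodPair ((θ / 2 : ℝ) : 𝕊) (((θ + 1) / 2 : ℝ) : 𝕊))
  | n + 1 => F ⁻¹' Omega θ n ∩ Omega θ 0

/-- The non-escaping set `NE₁(θ) = ⋂ₙ Ωₙ`. -/
noncomputable def NE1 (θ : ℝ) : Set 𝕋 := ⋂ n, Omega θ n

/-- The non-escaping set `NE₂(θ) = ⋂ₙ closure Ωₙ`. -/
noncomputable def NE2 (θ : ℝ) : Set 𝕋 := ⋂ n, closure (Omega θ n)

/-! ### Auxiliary material -/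

/-- The doubling map on the circle. -/
noncomputable def gg : 𝕊 → 𝕊 := fun x => x + x

instance : LocallyConnectedSpace 𝕊 := by
  rw [locallyConnectedSpace_iff_connected_subsets]
  intro x U hU
  obtain ⟨r, rfl⟩ : ∃ r : ℝ, (r : 𝕊) = x := QuotientAddGroup.mk'_surjective _ x
  have hc : Continuous ((↑) : ℝ → 𝕊) := AddCircle.continuous_mk' 1
  have hpre : ((↑) : ℝ → 𝕊) ⁻¹' U ∈ nhds r := hc.continuousAt.preimage_mem_nhds hU
  obtain ⟨ε, hε, hball⟩ := Metric.mem_nhds_iff.1 hpre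
  refine ⟨((↑) : ℝ → 𝕊) '' Metric.ball r ε, ?_, ?_, ?_⟩
  · exact (QuotientAddGroup.isOpenMap_coe _ Metric.isOpen_ball).mem_nhds
      ⟨r, Metric.mem_ball_self hε, rfl⟩
  · exact ((convex_ball r ε).isPreconnected).image _ hc.continuousOn
  · exact image_subset_iff.2 hball

lemma gg_coe (r : ℝ) : gg (r : 𝕊) = ((2 * r : ℝ) : 𝕊) := by
  show ((r : 𝕊) + r) = _
  rw [show (2 * r : ℝ) = r + r by ring, AddCircle.coe_add]

lemma gg_iter_coe (k : ℕ) (r : ℝ) : gg^[k] (r : 𝕊) = ((2 ^ k * r : ℝ) : 𝕊) := by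
  induction k generalizing r with
  | zero => simp
  | succ k ih =>
    rw [Function.iterate_succ_apply, gg_coe, ih]
    ring_nf

lemma diag_mem_Omega0 (θ : ℝ) (y : 𝕊)
    (hy : y ∉ ({((θ / 2 : ℝ) : 𝕊), (((θ + 1) / 2 : ℝ) : 𝕊)} : Set 𝕊)) :
    (y, y) ∈ Omega θ 0 := by
  set a : 𝕊 := ((θ / 2 : ℝ) : 𝕊)
  set b : 𝕊 := (((θ + 1) / 2 : ℝ) : 𝕊)
  rw [Omega]
  have hopenC : IsOpen ({a, b} : Set 𝕊)ᶜ :=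
    (((Set.finite_singleton b).insert a).isClosed).isOpen_compl
  have harc : IsOpen (arcAt a b y) := hopenC.connectedComponentIn
  have hsub : arcAt a b y ×ˢ arcAt a b y ⊆ goodPair a b := by
    rintro ⟨u, v⟩ ⟨hu, hv⟩
    exact ⟨y, hy, subset_closure hu, subset_closure hv⟩
  have hmem : (y, y) ∈ arcAt a b y ×ˢ arcAt a b y :=
    ⟨mem_connectedComponentIn hy, mem_connectedComponentIn hy⟩
  exact interior_maximal hsub (harc.prod harc) hmem

lemma diag_mem_Omega (θ : ℝ) :
    ∀ n : ℕ, ∀ y : 𝕊,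
      (∀ k : ℕ, gg^[k] y ∉ ({((θ / 2 : ℝ) : 𝕊), (((θ + 1) / 2 : ℝ) : 𝕊)} : Set 𝕊)) →
      (y, y) ∈ Omega θ n := by
  intro n
  induction n with
  | zero =>
    intro y hy
    exact diag_mem_Omega0 θ y (by simpa using hy 0)
  | succ n ih =>
    intro y hy
    rw [Omega]
    refine ⟨?_, diag_mem_Omega0 θ y (by simpa using hy 0)⟩
    show F (y, y) ∈ Omega θ n
    have hF : F (y, y) = (gg y, gg y) := rfl
    rw [hF]
    exact ih (gg y) fun k => by
      have := hy (k + 1); rwa [Function.iterate_succ_apply] at this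

/-- The set of real lifts of "bad" circle points is countable. -/
lemma bad_pre_countable (θ : ℝ) :
    Set.Countable (((↑) : ℝ → 𝕊) ⁻¹' {y : 𝕊 | ∃ k : ℕ,
      gg^[k] y ∈ ({((θ / 2 : ℝ) : 𝕊), (((θ + 1) / 2 : ℝ) : 𝕊)} : Set 𝕊)}) := by
  have hsub : (((↑) : ℝ → 𝕊) ⁻¹' {y : 𝕊 | ∃ k : ℕ,
      gg^[k] y ∈ ({((θ / 2 : ℝ) : 𝕊), (((θ + 1) / 2 : ℝ) : 𝕊)} : Set 𝕊)}) ⊆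
      ⋃ (k : ℕ), ⋃ (m : ℤ),
        ({(θ / 2 + m) / 2 ^ k, ((θ + 1) / 2 + m) / 2 ^ k} : Set ℝ) := by
    rintro r ⟨k, hk⟩
    rw [gg_iter_coe] at hk
    have h2k : (2 : ℝ) ^ k ≠ 0 := by positivity
    rcases hk with h | h
    · obtain ⟨m, hm⟩ : ∃ m : ℤ, (m : ℝ) = 2 ^ k * r - θ / 2 := by
        have := (QuotientAddGroup.eq_iff_sub_mem).1 h
        obtain ⟨m, hm⟩ := AddSubgroup.mem_zmultiples_iff.1 this
        exact ⟨m, by simpa using hm⟩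
      refine mem_iUnion.2 ⟨k, mem_iUnion.2 ⟨m, Or.inl ?_⟩⟩
      rw [eq_div_iff h2k]
      linear_combination -hm
    · obtain ⟨m, hm⟩ : ∃ m : ℤ, (m : ℝ) = 2 ^ k * r - (θ + 1) / 2 := by
        have := (QuotientAddGroup.eq_iff_sub_mem).1 (Set.mem_singleton_iff.1 h)
        obtain ⟨m, hm⟩ := AddSubgroup.mem_zmultiples_iff.1 this
        exact ⟨m, by simpa using hm⟩
      refine mem_iUnion.2 ⟨k, mem_iUnion.2 ⟨m, Or.inr (Set.mem_singleton_iff.2 ?_)⟩⟩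
      rw [eq_div_iff h2k]
      linear_combination -hm
  exact Set.Countable.mono hsub
    (Set.countable_iUnion fun k => Set.countable_iUnion fun m =>
      (Set.countable_singleton _).insert _)


/-- For `θ ∈ (ℝ/ℤ) ∖ {0}` with representative `θ̂ ∈ (0,1)`, the
diagonal `Δ` is contained in the closure of `NE₁(θ)`, and the closure of `NE₁(θ)` is
contained in `NE₂(θ)` (in particular `Δ ⊆ NE₂(θ)`). -/
theorem diagonal_subset_nonescaping (θ : ℝ) (hθ : θ ∈ Ioo (0 : ℝ) 1) :
    {p : 𝕋 | p.1 = p.2} ⊆ closure (NE1 θ) ∧ closure (NE1 θ) ⊆ NE2 θ := by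
  constructor
  · set Bad := {y : 𝕊 | ∃ k : ℕ,
      gg^[k] y ∈ ({((θ / 2 : ℝ) : 𝕊), (((θ + 1) / 2 : ℝ) : 𝕊)} : Set 𝕊)} with hBad
    have hc : Continuous ((↑) : ℝ → 𝕊) := AddCircle.continuous_mk' 1
    have hsurj : Function.Surjective ((↑) : ℝ → 𝕊) := QuotientAddGroup.mk'_surjective _
    have hdense : Dense Badᶜ := by
      have hd : Dense ((((↑) : ℝ → 𝕊) ⁻¹' Bad)ᶜ) := (bad_pre_countable θ).dense_compl ℝ
      have him : Dense (((↑) : ℝ → 𝕊) '' ((((↑) : ℝ → 𝕊) ⁻¹' Bad)ᶜ)) :=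
        hsurj.denseRange.dense_image hc hd
      refine him.mono ?_
      rintro _ ⟨r, hr, rfl⟩
      exact hr
    have hsub : (fun y : 𝕊 => ((y, y) : 𝕋)) '' Badᶜ ⊆ NE1 θ := by
      rintro p ⟨y, hy, rfl⟩
      exact mem_iInter.2 fun n => diag_mem_Omega θ n y fun k hk => hy ⟨k, hk⟩
    intro p hp
    have hp' : p = (p.1, p.1) := Prod.ext rfl (Set.mem_setOf_eq ▸ hp).symm
    have hcont : Continuous fun y : 𝕊 => ((y, y) : 𝕋) := continuous_id.prodMk continuous_id
    have h1 : p ∈ (fun y : 𝕊 => ((y, y) : 𝕋)) '' closure Badᶜ := by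
      rw [hdense.closure_eq]
      exact ⟨p.1, trivial, hp'.symm⟩
    exact closure_mono hsub (image_closure_subset_closure_image hcont h1)
  · intro p hp
    exact mem_iInter.2 fun n => closure_mono (iInter_subset (fun n => Omega θ n) n) hp
end

section
/- Let θ ∈ ℝ/ℤ be rational, and let α, α + 1/2 ∈ ℝ/ℤ be the two preimages of θ under the doubling map τ(x) = 2x. Then: (i) if θ is periodic under τ, exactly one of α, α + 1/2 is periodic under τ, and the other is strictly preperiodic; (ii) if θ is strictly preperiodic under τ, then both α and α + 1/2 are strictly preperiodic. -/
open Set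

/-- The angle doubling map `τ(x) = 2x` on the circle. -/
noncomputable def dbl : 𝕊 → 𝕊 := fun x => x + x

/-- `α ∈ ℝ/ℤ` is periodic under the doubling map. -/
noncomputable def IsPer (α : 𝕊) : Prop := ∃ n > 0, dbl^[n] α = α

/-- `α ∈ ℝ/ℤ` is strictly preperiodic under the doubling map: some forward iterate is
periodic but `α` itself is not. -/
noncomputable def IsStrictPrePer (α : 𝕊) : Prop :=
  (∃ k > 0, IsPer (dbl^[k] α)) ∧ ¬ IsPer α

lemma half_ne_zero : ((1 / 2 : ℝ) : 𝕊) ≠ 0 := by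
  intro h
  rw [AddCircle.coe_eq_zero_iff] at h
  obtain ⟨n, hn⟩ := h
  have h : (n : ℝ) = 1 / 2 := by simpa using hn
  have h2 : ((2 * n : ℤ) : ℝ) = 1 := by push_cast; linarith
  have : (2 * n : ℤ) = 1 := by exact_mod_cast h2
  omega

lemma half_add_half : ((1 / 2 : ℝ) : 𝕊) + ((1 / 2 : ℝ) : 𝕊) = 0 := by
  rw [← AddCircle.coe_add]
  norm_num

lemma two_torsion (z : 𝕊) (h : z + z = 0) : z = 0 ∨ z = ((1 / 2 : ℝ) : 𝕊) := by
  induction z using QuotientAddGroup.induction_on with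
  | H r =>
    rw [← AddCircle.coe_add, AddCircle.coe_eq_zero_iff] at h
    obtain ⟨m, hm⟩ := h
    simp only [zsmul_eq_mul, mul_one] at hm
    rcases Int.even_or_odd m with ⟨c, hc⟩ | ⟨c, hc⟩
    · left
      rw [AddCircle.coe_eq_zero_iff]
      exact ⟨c, by simp only [zsmul_eq_mul, mul_one]; push_cast [hc] at hm ⊢; linarith⟩
    · right
      have : (↑r - ((1 / 2 : ℝ)) : ℝ) = (c : ℝ) := by push_cast [hc] at hm ⊢; linarith
      have hz : ((r - (1/2 : ℝ) : ℝ) : 𝕊) = 0 := by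
        rw [AddCircle.coe_eq_zero_iff]
        exact ⟨c, by simp only [zsmul_eq_mul, mul_one]; linarith [this]⟩
      rw [AddCircle.coe_sub] at hz
      exact sub_eq_zero.mp hz

lemma dbl_eq_dbl {x y : 𝕊} (h : dbl x = dbl y) : x = y ∨ x = y + ((1 / 2 : ℝ) : 𝕊) := by
  have ht : (x - y) + (x - y) = 0 := by
    simp only [dbl] at h
    abel_nf
    abel_nf at h
    rw [h]; abel
  rcases two_torsion _ ht with h0 | hh
  · left; exact sub_eq_zero.mp h0
  · right; rw [← hh]; abel

lemma dbl_iterate_comm (n : ℕ) (x : 𝕊) : dbl^[n] (dbl x) = dbl (dbl^[n] x) := by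
  rw [← Function.iterate_succ_apply, Function.iterate_succ_apply']

lemma isPer_dbl {x : 𝕊} (h : IsPer x) : IsPer (dbl x) := by
  obtain ⟨n, hn, hfix⟩ := h
  exact ⟨n, hn, by rw [dbl_iterate_comm, hfix]⟩

lemma per_mul {x : 𝕊} {n : ℕ} (h : dbl^[n] x = x) (m : ℕ) : dbl^[n * m] x = x := by
  induction m with
  | zero => simp
  | succ m ih =>
    rw [Nat.mul_succ, Function.iterate_add_apply, h, ih]

/-- A periodic point is determined by its image under `dbl`. -/
lemma per_preimage_unique {x y : 𝕊} (hx : IsPer x) (hy : IsPer y) (h : dbl x = dbl y) :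
    x = y := by
  obtain ⟨p, hp, hpx⟩ := hx
  obtain ⟨q, hq, hqy⟩ := hy
  have hx' : dbl^[p * q] x = x := per_mul hpx q
  have hy' : dbl^[p * q] y = y := by
    rw [mul_comm]; exact per_mul hqy p
  have hN : 0 < p * q := Nat.mul_pos hp hq
  have e1 : x = dbl^[p * q - 1] (dbl x) := by
    rw [← Function.iterate_succ_apply, Nat.succ_eq_add_one, Nat.sub_add_cancel hN, hx']
  have e2 : y = dbl^[p * q - 1] (dbl y) := by
    rw [← Function.iterate_succ_apply, Nat.succ_eq_add_one, Nat.sub_add_cancel hN, hy']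
  rw [e1, e2, h]

/-- Let `θ ∈ ℝ/ℤ` be rational and let `α` and `α + 1/2` be its two
preimages under the doubling map. If `θ` is periodic, exactly one of the two preimages
is periodic and the other is strictly preperiodic; if `θ` is strictly preperiodic, both
preimages are strictly preperiodic. -/
theorem preimages_of_rational_angle (θ α : 𝕊)
    (hrat : ∃ q : ℚ, ((q : ℝ) : 𝕊) = θ) (hpre : dbl α = θ) :
    (IsPer θ →
      (IsPer α ∧ IsStrictPrePer (α + ((1 / 2 : ℝ) : 𝕊))) ∨
      (IsPer (α + ((1 / 2 : ℝ) : 𝕊)) ∧ IsStrictPrePer α)) ∧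
    (IsStrictPrePer θ →
      IsStrictPrePer α ∧ IsStrictPrePer (α + ((1 / 2 : ℝ) : 𝕊))) := by
  set h2 : 𝕊 := ((1 / 2 : ℝ) : 𝕊) with hh2
  set β : 𝕊 := α + h2 with hβdef
  have hβpre : dbl β = θ := by
    simp only [dbl, hβdef] at hpre ⊢
    calc α + h2 + (α + h2) = (α + α) + (h2 + h2) := by abel
    _ = θ := by rw [half_add_half, hpre, add_zero]
  have hne : α ≠ β := by
    intro h
    apply half_ne_zero
    have := h.symm
    rw [hβdef, left_eq_add] at h
    exact h
  constructor
  · intro hθ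
    obtain ⟨n, hn, hfix⟩ := hθ
    set γ : 𝕊 := dbl^[n - 1] θ with hγ
    have hγpre : dbl γ = θ := by
      have e := Function.iterate_succ_apply' dbl (n - 1) θ
      rw [hγ, ← e, Nat.succ_eq_add_one, Nat.sub_add_cancel hn, hfix]
    have hγper : IsPer γ := by
      refine ⟨n, hn, ?_⟩
      rw [hγ, ← Function.iterate_add_apply, Nat.add_comm, Function.iterate_add_apply, hfix]
    have hθper : IsPer θ := ⟨n, hn, hfix⟩
    have hsingle : ¬ (IsPer α ∧ IsPer β) := by
      rintro ⟨ha, hb⟩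
      exact hne (per_preimage_unique ha hb (by rw [hpre, hβpre]))
    rcases dbl_eq_dbl (x := γ) (y := α) (by rw [hγpre, hpre]) with rfl | hcase
    · left
      refine ⟨hγper, ⟨1, one_pos, ?_⟩, fun hb => hsingle ⟨hγper, hb⟩⟩
      rw [Function.iterate_one, hβpre]; exact hθper
    · right
      have hβγ : β = γ := by rw [hβdef, hcase]
      rw [← hβγ] at hγper
      exact ⟨hγper, ⟨1, one_pos, by rw [Function.iterate_one, hpre]; exact hθper⟩,
        fun ha => hsingle ⟨ha, hγper⟩⟩
  · rintro ⟨⟨k, hk, hkper⟩, hnot⟩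
    have hα : IsStrictPrePer α := by
      refine ⟨⟨k + 1, Nat.succ_pos k, ?_⟩, fun h => hnot (by rw [← hpre]; exact isPer_dbl h)⟩
      rw [Function.iterate_succ_apply, hpre]; exact hkper
    have hβ : IsStrictPrePer β := by
      refine ⟨⟨k + 1, Nat.succ_pos k, ?_⟩, fun h => hnot (by rw [← hβpre]; exact isPer_dbl h)⟩
      rw [Function.iterate_succ_apply, hβpre]; exact hkper
    exact ⟨hα, hβ⟩
end

section
/- Let X and Y be compact metric spaces, f : X → X and q : Y → Y continuous maps, and π : Y → X a continuous surjection with f ∘ π = π ∘ q. Then the topological entropy of f is at most the topological entropy of q. If moreover sup_{x ∈ X} #π^{−1}(x) < ∞ (the fibers of π have uniformly bounded finite cardinality), then the topological entropies of f and q are equal. -/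
/-!
`h(f) ≤ h(q)` holds for any uniformly continuous surjective factor map. Conversely, fix an
entourage `W` of `Y` and a block length `m`. Since `π` is closed, the preimage of a small
neighbourhood of `x` lies in the union of the `(W, m)`-dynamical balls centred at the at most `N`
points of one fibre, and by the Lebesgue number lemma a single entourage `U` of `X` works for all
`x`. Following a `(U, m n)`-dynamical cover of `X` block by block, every point of `Y` gets a code
made of a cover point and `n` fibre points, and points with the same code are `(W ○ W, m n)`-close.
Hence `m h_W(q) ≤ m h(f) + log N` for every `m ≥ 1`, which forces `h_W(q) ≤ h(f)`.
-/

open Set Dynamics Function Filter Topology Uniformity UniformSpace ENNReal EReal ExpGrowth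
open scoped SetRel

lemma EReal.le_of_forall_natCast_mul_le_mul_add {a b c : EReal} (hc : c ≠ ⊤)
    (h : ∀ m : ℕ, 0 < m → (m : EReal) * b ≤ m * a + c) : b ≤ a := by
  by_contra! hab
  obtain ⟨r, har, hrb⟩ := EReal.exists_between_coe_real hab
  obtain ⟨s, hrs, hsb⟩ := EReal.exists_between_coe_real hrb
  obtain ⟨t, hct, -⟩ := EReal.exists_between_coe_real (lt_top_iff_ne_top.2 hc)
  obtain ⟨m, hm, htm⟩ : ∃ m : ℕ, 0 < m ∧ t < m * (s - r) := by
    have hsr : 0 < s - r := sub_pos_of_lt (EReal.coe_lt_coe_iff.1 hrs)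
    obtain ⟨m, hm⟩ := exists_nat_gt (t / (s - r))
    refine ⟨m + 1, m.succ_pos, (div_lt_iff₀ hsr).1 ?_⟩
    exact hm.trans (by simp)
  have hm0 : (0 : EReal) ≤ m := by positivity
  have key : ((m * s : ℝ) : EReal) < (m * r + t : ℝ) := calc
    ((m * s : ℝ) : EReal) = m * (s : EReal) := by norm_cast
    _ ≤ m * b := mul_le_mul_of_nonneg_left hsb.le hm0
    _ ≤ m * a + c := h m hm
    _ ≤ m * r + c := add_le_add_left (mul_le_mul_of_nonneg_left har.le hm0) c
    _ < m * r + t := EReal.add_lt_add_left_coe hct _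
    _ = (m * r + t : ℝ) := by norm_cast
  have := EReal.coe_lt_coe_iff.1 key
  linarith

namespace Dynamics

variable {X Y : Type*} {f : X → X} {q : Y → Y} {π : Y → X}

lemma _root_.IsClosedMap.exists_mem_uniformity_fiber_dynEntourage [UniformSpace X] [CompactSpace X]
    [UniformSpace Y] (hq : Continuous q) (hπ : IsClosedMap π) {W : SetRel Y Y} (hW : W ∈ 𝓤 Y)
    (m : ℕ) :
    ∃ U ∈ 𝓤 X, ∀ x, ∃ x₀, ∀ y, (π y, x) ∈ U →
      ∃ z ∈ π ⁻¹' {x₀}, y ∈ ball z (dynEntourage q W m) := by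
  have hnhds (x₀ : X) : ∀ᶠ x in 𝓝 x₀,
      ∀ y ∈ π ⁻¹' {x}, ∃ z ∈ π ⁻¹' {x₀}, y ∈ ball z (dynEntourage q W m) :=
    hπ.eventually_nhds_fiber x₀ fun z hz ↦
      mem_of_superset (ball_dynEntourage_mem_nhds hq hW m z) fun y hy ↦ ⟨z, hz, hy⟩
  obtain ⟨V, hV, hVO⟩ := lebesgue_number_lemma_nhds isCompact_univ fun x₀ _ ↦ hnhds x₀
  exact ⟨Prod.swap ⁻¹' V, tendsto_swap_uniformity hV, fun x ↦
    (hVO x (mem_univ x)).imp fun x₀ hx₀ y hy ↦ hx₀ hy y rfl⟩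

lemma IsDynCoverOf.netMaxcard_le_card_mul_pow (hsemi : Semiconj π q f) {U : SetRel X X}
    {W : SetRel Y Y} [W.IsRefl] [W.IsSymm] {m N : ℕ} (hm : 0 < m) {F : X → Finset Y}
    (hF : ∀ x, (F x).card ≤ N)
    (hUF : ∀ x y, (π y, x) ∈ U → ∃ z ∈ F x, y ∈ ball z (dynEntourage q W m))
    {n : ℕ} {s : Finset X} (hs : IsDynCoverOf f univ U (m * n) s) :
    netMaxcard q univ (W ○ W) (m * n) ≤ s.card * N ^ n := by
  choose c hcs hc using fun y ↦ hs (mem_univ (π y))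
  have hblock (y : Y) (j : Fin n) :
      ∃ z ∈ F (f^[m * j] (c y)), q^[m * j] y ∈ ball z (dynEntourage q W m) := by
    refine hUF _ _ ?_
    rw [hsemi.iterate_right]
    exact mem_dynEntourage.1 (hc y) _ (Nat.mul_lt_mul_of_pos_left j.2 hm)
  choose z hzF hz using hblock
  have hclose {y y' : Y} (h : z y = z y') : (y, y') ∈ dynEntourage q (W ○ W) (m * n) := by
    refine mem_dynEntourage.2 fun k hk ↦ ?_
    have hj : k / m < n := (Nat.div_lt_iff_lt_mul hm).2 (by rwa [mul_comm])
    have hk (y : Y) : q^[k % m] (q^[m * (k / m)] y) = q^[k] y := by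
      rw [← iterate_add_apply, Nat.mod_add_div]
    have hW (y : Y) : (q^[k % m] (z y ⟨k / m, hj⟩), q^[k] y) ∈ W :=
      hk y ▸ mem_dynEntourage.1 (hz y ⟨k / m, hj⟩) _ (Nat.mod_lt k hm)
    exact SetRel.prodMk_mem_comp ((SetRel.comm W).1 (hW y)) (h ▸ hW y')
  refine iSup₂_le fun E hE ↦ ?_
  let codes := s.sigma fun x ↦ Fintype.piFinset fun j : Fin n ↦ F (f^[m * j] x)
  have hmaps : ∀ y ∈ E, (⟨c y, z y⟩ : Σ _ : X, Fin n → Y) ∈ codes := fun y _ ↦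
    Finset.mem_sigma.2 ⟨hcs y, Fintype.mem_piFinset.2 (hzF y)⟩
  have hinj : InjOn (fun y ↦ (⟨c y, z y⟩ : Σ _ : X, Fin n → Y)) E := by
    intro y hy y' hy' h
    exact hE.2.elim_set hy hy' y' (hclose (eq_of_heq (Sigma.mk.inj h).2))
      (SetRel.rfl (R := dynEntourage q (W ○ W) (m * n)))
  have hcodes : codes.card ≤ s.card * N ^ n := by
    rw [Finset.card_sigma]
    refine Finset.sum_le_card_nsmul _ _ _ fun x _ ↦ ?_
    rw [Fintype.card_piFinset]
    exact (Finset.prod_le_pow_card Finset.univ (fun j : Fin n ↦ (F (f^[m * j] x)).card) N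
      fun j _ ↦ hF _).trans_eq (by simp)
  exact_mod_cast (Finset.card_le_card_of_injOn _ hmaps hinj).trans hcodes

lemma natCast_mul_netEntropyEntourage_le (hsemi : Semiconj π q f) {U : SetRel X X}
    {W : SetRel Y Y} [W.IsRefl] [W.IsSymm] {m N : ℕ} (hm : 0 < m) (hN : N ≠ 0)
    {F : X → Finset Y} (hF : ∀ x, (F x).card ≤ N)
    (hUF : ∀ x y, (π y, x) ∈ U → ∃ z ∈ F x, y ∈ ball z (dynEntourage q W m)) :
    m * netEntropyEntourage q univ (W ○ W) ≤ m * coverEntropyEntourage f univ U + log N := by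
  have hcount (n : ℕ) :
      netMaxcard q univ (W ○ W) (m * n) ≤ coverMincard f univ U (m * n) * N ^ n := by
    rcases eq_top_or_lt_top (coverMincard f univ U (m * n)) with h | h
    · rw [h, ENat.top_mul (pow_ne_zero _ (by exact_mod_cast hN))]
      exact le_top
    · obtain ⟨s, hs, hcard⟩ := (coverMincard_finite_iff f univ U (m * n)).1 h
      exact hcard ▸ hs.netMaxcard_le_card_mul_pow hsemi hm hF hUF
  have hnet : expGrowthSup (fun n ↦ (netMaxcard q univ (W ○ W) (m * n) : ℝ≥0∞)) =
      m * netEntropyEntourage q univ (W ○ W) :=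
    Monotone.expGrowthSup_comp_mul (u := fun n ↦ (netMaxcard q univ (W ○ W) n : ℝ≥0∞))
      (fun _ _ h ↦ ENat.toENNReal_mono (netMaxcard_monotone_time q univ _ h)) hm.ne'
  have hcov : expGrowthSup (fun n ↦ (coverMincard f univ U (m * n) : ℝ≥0∞)) =
      m * coverEntropyEntourage f univ U :=
    Monotone.expGrowthSup_comp_mul (u := fun n ↦ (coverMincard f univ U n : ℝ≥0∞))
      (fun _ _ h ↦ ENat.toENNReal_mono (coverMincard_monotone_time f univ U h)) hm.ne'
  have hlogN : log (N : ℝ≥0∞) ≠ ⊤ ∧ log (N : ℝ≥0∞) ≠ ⊥ := by simp [hN]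
  rw [← hnet, ← hcov, ← expGrowthSup_pow]
  refine (expGrowthSup_monotone fun n ↦ ?_).trans <|
    expGrowthSup_mul_le (.inr (by simp [expGrowthSup_pow, hlogN]))
      (.inr (by simp [expGrowthSup_pow, hlogN]))
  simpa using ENat.toENNReal_mono (hcount n)

theorem coverEntropy_le_of_isClosedMap_of_finite_fibers [UniformSpace X] [CompactSpace X]
    [UniformSpace Y] (hsemi : Semiconj π q f) (hq : Continuous q) (hπ : IsClosedMap π) {N : ℕ}
    (hN : ∀ x, (π ⁻¹' {x}).Finite ∧ Nat.card (π ⁻¹' {x}) ≤ N) :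
    coverEntropy q univ ≤ coverEntropy f univ := by
  rw [coverEntropy_eq_iSup_netEntropyEntourage]
  refine iSup₂_le fun V hV ↦ ?_
  obtain ⟨W, hW, hWsymm, hWV⟩ := comp_symm_mem_uniformity_sets hV
  have := isRefl_of_mem_uniformity hW
  -- `N + 1` rather than `N` keeps `log` finite when `N = 0`, i.e. when `Y` is empty.
  refine (netEntropyEntourage_antitone q univ hWV).trans <|
    EReal.le_of_forall_natCast_mul_le_mul_add (c := log ((N + 1 : ℕ) : ℝ≥0∞)) (by simp)
      fun m hm ↦ ?_
  obtain ⟨U, hU, hUF⟩ := hπ.exists_mem_uniformity_fiber_dynEntourage hq hW m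
  choose x₀ hx₀ using hUF
  calc (m : EReal) * netEntropyEntourage q univ (W ○ W)
      ≤ m * coverEntropyEntourage f univ U + log ((N + 1 : ℕ) : ℝ≥0∞) :=
        natCast_mul_netEntropyEntourage_le hsemi hm N.succ_ne_zero
          (F := fun x ↦ (hN (x₀ x)).1.toFinset) (fun x ↦ ?_) fun x y hxy ↦ ?_
    _ ≤ m * coverEntropy f univ + log ((N + 1 : ℕ) : ℝ≥0∞) := by
        gcongr
        exact coverEntropyEntourage_le_coverEntropy f univ hU
  · rw [← Set.ncard_eq_toFinset_card _ (hN (x₀ x)).1, ← Nat.card_coe_set_eq]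
    exact (hN (x₀ x)).2.trans N.le_succ
  · simpa only [Set.Finite.mem_toFinset] using hx₀ x y hxy

end Dynamics

theorem entropy_semiconjugacy_general {X Y : Type*}
    [MetricSpace X] [CompactSpace X] [MetricSpace Y] [CompactSpace Y]
    (f : X → X) (q : Y → Y) (π : Y → X)
    (hq : Continuous q) (hπ : Continuous π)
    (hsurj : Function.Surjective π) (hsemi : f ∘ π = π ∘ q) :
    coverEntropy f (Set.univ : Set X) ≤ coverEntropy q (Set.univ : Set Y) ∧
    ((∃ N : ℕ, ∀ x : X, (π ⁻¹' {x}).Finite ∧ Nat.card (π ⁻¹' {x} : Set Y) ≤ N) →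
      coverEntropy f (Set.univ : Set X) = coverEntropy q (Set.univ : Set Y)) := by
  have hconj : Semiconj π q f := fun y ↦ (congrFun hsemi y).symm
  have hle : coverEntropy f univ ≤ coverEntropy q univ := by
    simpa only [image_univ, hsurj.range_eq] using coverEntropy_image_le_of_uniformContinuous
      hconj (CompactSpace.uniformContinuous_of_continuous hπ) univ
  exact ⟨hle, fun ⟨_, hN⟩ ↦ hle.antisymm <|
    coverEntropy_le_of_isClosedMap_of_finite_fibers hconj hq hπ.isClosedMap hN⟩

/-- If `π : Y → X` is a continuous surjective semi-conjugacy from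
`(Y, q)` to `(X, f)` between compact metric spaces, then the topological entropy of `f`
is at most that of `q`; if moreover the fibers of `π` have uniformly bounded finite
cardinality, the two entropies are equal. -/
theorem entropy_semiconjugacy {X Y : Type*}
    [MetricSpace X] [CompactSpace X] [MetricSpace Y] [CompactSpace Y]
    (f : X → X) (q : Y → Y) (π : Y → X)
    (hf : Continuous f) (hq : Continuous q) (hπ : Continuous π)
    (hsurj : Function.Surjective π) (hsemi : f ∘ π = π ∘ q) :
    coverEntropy f (Set.univ : Set X) ≤ coverEntropy q (Set.univ : Set Y) ∧
    ((∃ N : ℕ, ∀ x : X, (π ⁻¹' {x}).Finite ∧ Nat.card (π ⁻¹' {x} : Set Y) ≤ N) →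
      coverEntropy f (Set.univ : Set X) = coverEntropy q (Set.univ : Set Y)) :=
  entropy_semiconjugacy_general f q π hq hπ hsurj hsemi
end
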